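/- If p : ℝ → ℝ solves p' = p² - 1 with p(0) = 0, then p(s) = -tanh(s); consequently the generating curve of an invariant surface in Sol with extrinsic Gaussian curvature K_ext = 0 (not a leaf of the totally geodesic foliation) is α(s) = (0, tanh(s), -log(cosh(s))), i.e. z(s) = -log(cosh s) and y(s) = tanh(s) satisfy z' = p and y' = e^z·√(1-p²). -/

import Mathlib

/-!
The Riccati equation `p' = p² - 1` has the particular solution `-tanh`, and the difference
`w = p + tanh` of two solutions satisfies the linear equation `w' = (p - tanh) w`. A linear
equation with continuous coefficient `a` is solved by integrating factors, `(e^{-∫a} w)' = 0`,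
so `w(0) = 0` forces `w = 0`. Once `p = -tanh` is known, the generating curve is obtained by
integrating `z' = -tanh` and `y' = e^z √(1 - tanh²) = 1 / cosh² = tanh'`.
-/

open Real

theorem eq_of_hasDerivAt_eq {E : Type*} [NormedAddCommGroup E] [NormedSpace ℝ E]
    {f g f' : ℝ → E} (hf : ∀ x, HasDerivAt f (f' x) x) (hg : ∀ x, HasDerivAt g (f' x) x)
    {x₀ : ℝ} (h₀ : f x₀ = g x₀) : f = g :=
  eq_of_fderiv_eq (fun x => (hf x).differentiableAt) (fun x => (hg x).differentiableAt)
    (fun x => by rw [(hf x).hasFDerivAt.fderiv, (hg x).hasFDerivAt.fderiv]) x₀ h₀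

theorem eq_zero_of_hasDerivAt_mul_self {a w : ℝ → ℝ} (ha : Continuous a)
    (hw : ∀ x, HasDerivAt w (a x * w x) x) {x₀ : ℝ} (h₀ : w x₀ = 0) : w = 0 := by
  let A : ℝ → ℝ := fun x => ∫ t in x₀..x, a t
  have hA : ∀ x, HasDerivAt A (a x) x := fun x => (ha.integral_hasStrictDerivAt x₀ x).hasDerivAt
  have hconst : (fun x => exp (-A x) * w x) = fun _ => 0 :=
    eq_of_hasDerivAt_eq (f' := fun _ => 0) (x₀ := x₀)
      (fun x => (((hA x).neg.exp).mul (hw x)).congr_deriv (by ring))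
      (fun x => hasDerivAt_const x 0) (by simp [h₀])
  funext x
  simpa [exp_ne_zero] using congrFun hconst x

namespace Real

theorem one_sub_tanh_sq (x : ℝ) : 1 - tanh x ^ 2 = (cosh x)⁻¹ ^ 2 := by
  have hc : cosh x ≠ 0 := (cosh_pos x).ne'
  rw [tanh_eq_sinh_div_cosh]
  field_simp
  linarith [cosh_sq x]

theorem sqrt_one_sub_tanh_sq (x : ℝ) : √(1 - tanh x ^ 2) = (cosh x)⁻¹ := by
  rw [one_sub_tanh_sq, sqrt_sq (inv_pos.2 (cosh_pos x)).le]

theorem hasDerivAt_tanh (x : ℝ) : HasDerivAt tanh (1 - tanh x ^ 2) x := by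
  have hc : cosh x ≠ 0 := (cosh_pos x).ne'
  rw [show tanh = fun y => sinh y / cosh y from funext tanh_eq_sinh_div_cosh]
  refine ((hasDerivAt_sinh x).div (hasDerivAt_cosh x) hc).congr_deriv ?_
  field_simp

theorem continuous_tanh : Continuous tanh := by
  rw [show tanh = fun y => sinh y / cosh y from funext tanh_eq_sinh_div_cosh]
  exact continuous_sinh.div continuous_cosh fun x => (cosh_pos x).ne'

theorem hasDerivAt_log_cosh (x : ℝ) : HasDerivAt (fun y => log (cosh y)) (tanh x) x := by
  rw [tanh_eq_sinh_div_cosh]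
  exact (hasDerivAt_cosh x).log (cosh_pos x).ne'

theorem exp_neg_log_cosh (x : ℝ) : exp (-log (cosh x)) = (cosh x)⁻¹ := by
  rw [exp_neg, exp_log (cosh_pos x)]

end Real

theorem eq_neg_tanh_of_riccati {p : ℝ → ℝ} (hp : ∀ x, HasDerivAt p (p x ^ 2 - 1) x)
    (h₀ : p 0 = 0) (x : ℝ) : p x = -tanh x := by
  have hpc : Continuous p := continuous_iff_continuousAt.2 fun x => (hp x).continuousAt
  have hw : ∀ x, HasDerivAt (fun y => p y + tanh y) ((p x - tanh x) * (p x + tanh x)) x :=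
    fun x => ((hp x).add (hasDerivAt_tanh x)).congr_deriv (by ring)
  have hw_zero := eq_zero_of_hasDerivAt_mul_self (hpc.sub continuous_tanh) hw (x₀ := 0)
    (by simp [h₀])
  have hx : p x + tanh x = 0 := congrFun hw_zero x
  linarith

theorem stmt_10 (p : ℝ → ℝ) (hp : ∀ s, HasDerivAt p (p s ^ 2 - 1) s) (h0 : p 0 = 0) :
    (∀ s, p s = - tanh s) ∧
    ∀ (z y : ℝ → ℝ),
      (∀ s, HasDerivAt z (p s) s) → z 0 = 0 →
      (∀ s, HasDerivAt y (exp (z s) * sqrt (1 - p s ^ 2)) s) → y 0 = 0 →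
      (∀ s, z s = - log (cosh s)) ∧ (∀ s, y s = tanh s) := by
  have hp_eq := eq_neg_tanh_of_riccati hp h0
  refine ⟨hp_eq, fun z y hz hz0 hy hy0 => ?_⟩
  have hz_eq : z = fun s => -log (cosh s) :=
    eq_of_hasDerivAt_eq (x₀ := 0) (fun s => hp_eq s ▸ hz s)
      (fun s => (hasDerivAt_log_cosh s).neg) (by simp [hz0])
  have hy_eq : y = tanh := by
    refine eq_of_hasDerivAt_eq (x₀ := 0) (fun s => ?_) hasDerivAt_tanh (by simp [hy0])
    have h := hy s
    rw [congrFun hz_eq s, hp_eq, neg_sq, sqrt_one_sub_tanh_sq, exp_neg_log_cosh] at h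
    rwa [one_sub_tanh_sq, sq]
  exact ⟨congrFun hz_eq, congrFun hy_eq⟩
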